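/- Let P be a probability measure on ℝ of order 1 (i.e., ∫|x| dP(x) < ∞) and τ ∈ (0,1). Then q̄ is a τ-quantile of P if and only if q̄ minimizes q ↦ ∫_ℝ ρ_τ(x - q) dP(x) over ℝ. -/

import Mathlib

open MeasureTheory

noncomputable def rho (τ : ℝ) (x : ℝ) : ℝ := if x ≤ 0 then (τ - 1) * x else τ * x

/-!
Write `g q = ∫ ρ_τ(x - q) dP`, `F a = P(-∞, a]` and `F⁻ b = P(-∞, b)`. Since
`ρ_τ(x - b) - ρ_τ(x - a) = (b - x)⁺ - (a - x)⁺ - τ (b - a)` and the positive-part difference lies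
between `(b - a) 1{x ≤ a}` and `(b - a) 1{x < b}`, for `a ≤ b`
`(F a - τ)(b - a) ≤ g b - g a ≤ (F⁻ b - τ)(b - a)`.
So the quantile inequalities make `g` minimal at `q̄`; conversely minimality gives `F a ≤ τ` for
`a < q̄` and `F⁻ b ≥ τ` for `b > q̄`, and continuity of `P` along monotone sequences passes to the
limits `F⁻ q̄` and `F q̄`.
-/

open Set Filter

lemma rho_eq_mul_add_max (τ x : ℝ) : rho τ x = τ * x + max (-x) 0 := by
  unfold rho
  split_ifs
  · rw [max_eq_left (by linarith)]; ring
  · rw [max_eq_right (by linarith)]; ring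

lemma rho_sub_sub_rho_sub (τ a b x : ℝ) :
    rho τ (x - b) - rho τ (x - a) = max (b - x) 0 - max (a - x) 0 - τ * (b - a) := by
  simp only [rho_eq_mul_add_max, neg_sub]
  ring

lemma indicator_Iic_le_max_sub_sub_max_sub {a b : ℝ} (hab : a ≤ b) (x : ℝ) :
    (Iic a).indicator (fun _ => b - a) x ≤ max (b - x) 0 - max (a - x) 0 := by
  rcases le_or_gt x a with hx | hx
  · rw [indicator_of_mem (mem_Iic.2 hx), max_eq_left (by linarith), max_eq_left (by linarith)]
    linarith
  · rw [indicator_of_notMem (notMem_Iic.2 hx), max_eq_right (by linarith : a - x ≤ 0)]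
    simp

lemma max_sub_sub_max_sub_le_indicator_Iio {a b : ℝ} (hab : a ≤ b) (x : ℝ) :
    max (b - x) 0 - max (a - x) 0 ≤ (Iio b).indicator (fun _ => b - a) x := by
  rcases lt_or_ge x b with hx | hx
  · rw [indicator_of_mem (mem_Iio.2 hx), max_eq_left (by linarith : 0 ≤ b - x)]
    linarith [le_max_left (a - x) 0]
  · rw [indicator_of_notMem (notMem_Iio.2 hx), max_eq_right (by linarith),
      max_eq_right (by linarith)]
    simp

lemma integrable_max_sub_sub_max_sub {μ : Measure ℝ} [IsFiniteMeasure μ] (a b : ℝ) :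
    Integrable (fun x => max (b - x) 0 - max (a - x) 0) μ := by
  refine (integrable_const |b - a|).mono' (by fun_prop) (ae_of_all _ fun x => ?_)
  simpa using abs_max_sub_max_le_abs (b - x) (a - x) 0

lemma integrable_rho_sub {μ : Measure ℝ} [IsFiniteMeasure μ]
    (h1 : Integrable (fun x : ℝ => x) μ) (τ q : ℝ) :
    Integrable (fun x => rho τ (x - q)) μ := by
  simp only [rho_eq_mul_add_max, neg_sub]
  exact ((h1.sub (integrable_const q)).const_mul τ).add ((integrable_const q).sub h1).pos_part

lemma integral_rho_sub_sub_integral_rho_sub {P : Measure ℝ} [IsProbabilityMeasure P]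
    (h1 : Integrable (fun x : ℝ => x) P) (τ a b : ℝ) :
    ∫ x, rho τ (x - b) ∂P - ∫ x, rho τ (x - a) ∂P
      = ∫ x, (max (b - x) 0 - max (a - x) 0) ∂P - τ * (b - a) := by
  rw [← integral_sub (integrable_rho_sub h1 τ b) (integrable_rho_sub h1 τ a)]
  simp_rw [rho_sub_sub_rho_sub]
  rw [integral_sub (integrable_max_sub_sub_max_sub a b) (integrable_const _), integral_const,
    probReal_univ, one_smul]

lemma measureReal_Iic_mul_le_integral {μ : Measure ℝ} [IsFiniteMeasure μ] {a b : ℝ}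
    (hab : a ≤ b) :
    μ.real (Iic a) * (b - a) ≤ ∫ x, (max (b - x) 0 - max (a - x) 0) ∂μ := by
  rw [← smul_eq_mul, ← integral_indicator_const _ measurableSet_Iic]
  exact integral_mono ((integrable_const _).indicator measurableSet_Iic)
    (integrable_max_sub_sub_max_sub a b) (indicator_Iic_le_max_sub_sub_max_sub hab)

lemma integral_le_measureReal_Iio_mul {μ : Measure ℝ} [IsFiniteMeasure μ] {a b : ℝ}
    (hab : a ≤ b) :
    ∫ x, (max (b - x) 0 - max (a - x) 0) ∂μ ≤ μ.real (Iio b) * (b - a) := by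
  rw [← smul_eq_mul, ← integral_indicator_const _ measurableSet_Iio]
  exact integral_mono (integrable_max_sub_sub_max_sub a b)
    ((integrable_const _).indicator measurableSet_Iio) (max_sub_sub_max_sub_le_indicator_Iio hab)

lemma measureReal_Iic_sub_mul_le_integral_rho_sub {P : Measure ℝ} [IsProbabilityMeasure P]
    (h1 : Integrable (fun x : ℝ => x) P) (τ : ℝ) {a b : ℝ} (hab : a ≤ b) :
    (P.real (Iic a) - τ) * (b - a) ≤ ∫ x, rho τ (x - b) ∂P - ∫ x, rho τ (x - a) ∂P := by
  rw [integral_rho_sub_sub_integral_rho_sub h1]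
  linarith [measureReal_Iic_mul_le_integral (μ := P) hab]

lemma integral_rho_sub_le_measureReal_Iio_sub_mul {P : Measure ℝ} [IsProbabilityMeasure P]
    (h1 : Integrable (fun x : ℝ => x) P) (τ : ℝ) {a b : ℝ} (hab : a ≤ b) :
    ∫ x, rho τ (x - b) ∂P - ∫ x, rho τ (x - a) ∂P ≤ (P.real (Iio b) - τ) * (b - a) := by
  rw [integral_rho_sub_sub_integral_rho_sub h1]
  linarith [integral_le_measureReal_Iio_mul (μ := P) hab]

lemma measureReal_Iio_le_of_forall_lt {μ : Measure ℝ} [IsFiniteMeasure μ] {q c : ℝ}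
    (h : ∀ a < q, μ.real (Iic a) ≤ c) : μ.real (Iio q) ≤ c := by
  obtain ⟨u, hu_mono, hu_lt, hu_lim⟩ := exists_seq_strictMono_tendsto q
  have hunion : ⋃ n, Iic (u n) = Iio q := iUnion_Iic_eq_Iio_of_lt_of_tendsto hu_lt hu_lim
  have hlim := tendsto_measure_iUnion_atTop (μ := μ)
    (fun m n hmn => Iic_subset_Iic.2 (hu_mono.monotone hmn))
  rw [hunion] at hlim
  exact le_of_tendsto' ((ENNReal.tendsto_toReal (measure_ne_top μ _)).comp hlim)
    fun n => h _ (hu_lt n)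

lemma le_measureReal_Iic_of_forall_gt {μ : Measure ℝ} [IsFiniteMeasure μ] {q c : ℝ}
    (h : ∀ b > q, c ≤ μ.real (Iio b)) : c ≤ μ.real (Iic q) := by
  obtain ⟨u, hu_anti, hu_gt, hu_lim⟩ := exists_seq_strictAnti_tendsto q
  have hinter : ⋂ n, Iio (u n) = Iic q := by
    ext x
    simp only [mem_iInter, mem_Iio, mem_Iic]
    exact ⟨fun hx => ge_of_tendsto' hu_lim fun n => (hx n).le,
      fun hx n => hx.trans_lt (hu_gt n)⟩
  have hlim := tendsto_measure_iInter_atTop (μ := μ) (fun _ => measurableSet_Iio.nullMeasurableSet)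
    (fun m n hmn => Iio_subset_Iio (hu_anti.antitone hmn)) ⟨0, measure_ne_top μ _⟩
  rw [hinter] at hlim
  exact ge_of_tendsto' ((ENNReal.tendsto_toReal (measure_ne_top μ _)).comp hlim)
    fun n => h _ (hu_gt n)

theorem stmt15_general (P : Measure ℝ) [IsProbabilityMeasure P]
    (h1 : Integrable (fun x : ℝ => x) P)
    (τ : ℝ) (qbar : ℝ) :
    ((P (Set.Iio qbar)).toReal ≤ τ ∧ τ ≤ (P (Set.Iic qbar)).toReal) ↔
      (∀ q : ℝ, ∫ x, rho τ (x - qbar) ∂P ≤ ∫ x, rho τ (x - q) ∂P) := by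
  simp only [← measureReal_def]
  constructor
  · rintro ⟨hlo, hhi⟩ q
    rcases le_total qbar q with hq | hq
    · nlinarith [measureReal_Iic_sub_mul_le_integral_rho_sub h1 τ hq]
    · nlinarith [integral_rho_sub_le_measureReal_Iio_sub_mul h1 τ hq]
  · intro hmin
    refine ⟨measureReal_Iio_le_of_forall_lt fun a ha => ?_,
      le_measureReal_Iic_of_forall_gt fun b hb => ?_⟩
    · nlinarith [measureReal_Iic_sub_mul_le_integral_rho_sub h1 τ ha.le, hmin a]
    · nlinarith [integral_rho_sub_le_measureReal_Iio_sub_mul h1 τ hb.le, hmin b]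

theorem stmt15 (P : Measure ℝ) [IsProbabilityMeasure P]
    (h1 : Integrable (fun x : ℝ => x) P)
    (τ : ℝ) (hτ : τ ∈ Set.Ioo (0:ℝ) 1) (qbar : ℝ) :
    ((P (Set.Iio qbar)).toReal ≤ τ ∧ τ ≤ (P (Set.Iic qbar)).toReal) ↔
      (∀ q : ℝ, ∫ x, rho τ (x - qbar) ∂P ≤ ∫ x, rho τ (x - q) ∂P) :=
  stmt15_general P h1 τ qbar
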